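/- For all integers n ≥ m ≥ 2 and k ≥ 3: R(P^k_n, P^k_m) ≥ (k−1)n + ⌊(m+1)/2⌋, R(P^k_n, C^k_m) ≥ (k−1)n + ⌊(m+1)/2⌋, and R(C^k_n, C^k_m) ≥ (k−1)n + ⌊(m−1)/2⌋. -/

import Mathlib

open Finset

/-- The `i`-th edge (0-indexed) of a `k`-uniform loose path embedded via `f`. -/
def pathEdge (k : ℕ) {V : Type} [DecidableEq V] (f : ℕ → V) (i : ℕ) : Finset V :=
  (Finset.range k).image fun j => f (i * (k - 1) + j)

/-- The `i`-th edge (0-indexed) of a `k`-uniform loose cycle of length `n` embedded via `f`. -/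
def cycleEdge (k n : ℕ) {V : Type} [DecidableEq V] (f : ℕ → V) (i : ℕ) : Finset V :=
  (Finset.range k).image fun j => f ((i * (k - 1) + j) % (n * (k - 1)))

/-- There is a copy of the loose path `P^k_n` all of whose edges have color `b`. -/
def hasPath (k n : ℕ) {V : Type} [DecidableEq V] (col : Finset V → Bool) (b : Bool) : Prop :=
  ∃ f : ℕ → V, Set.InjOn f (Set.Iio (n * (k - 1) + 1)) ∧
    ∀ i < n, col (pathEdge k f i) = b

/-- There is a copy of the loose cycle `C^k_n` all of whose edges have color `b`. -/
def hasCycle (k n : ℕ) {V : Type} [DecidableEq V] (col : Finset V → Bool) (b : Bool) : Prop :=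
  ∃ f : ℕ → V, Set.InjOn f (Set.Iio (n * (k - 1))) ∧
    ∀ i < n, col (cycleEdge k n f i) = b

/-- Ramsey number `R(P^k_n, P^k_m)` (red = `true`, blue = `false`). -/
noncomputable def ramseyPP (k n m : ℕ) : ℕ :=
  sInf {N | ∀ col : Finset (Fin N) → Bool, hasPath k n col true ∨ hasPath k m col false}

/-- Ramsey number `R(P^k_n, C^k_m)`. -/
noncomputable def ramseyPC (k n m : ℕ) : ℕ :=
  sInf {N | ∀ col : Finset (Fin N) → Bool, hasPath k n col true ∨ hasCycle k m col false}

/-- Ramsey number `R(C^k_n, P^k_m)`. -/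
noncomputable def ramseyCP (k n m : ℕ) : ℕ :=
  sInf {N | ∀ col : Finset (Fin N) → Bool, hasCycle k n col true ∨ hasPath k m col false}

/-- Ramsey number `R(C^k_n, C^k_m)`. -/
noncomputable def ramseyCC (k n m : ℕ) : ℕ :=
  sInf {N | ∀ col : Finset (Fin N) → Bool, hasCycle k n col true ∨ hasCycle k m col false}

/-!
Colour a `k`-set red iff it lies inside a fixed vertex set `A`. A red `P^k_n` (resp. `C^k_n`)
needs `n(k-1)+1` (resp. `n(k-1)`) vertices in `A`. Every blue edge meets the complement of `A`,
and every vertex of a loose path or cycle lies in at most two of its edges, so a blue `P^k_m` or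
`C^k_m` needs `⌈m/2⌉` vertices outside `A`. Taking `|A| = n(k-1)` (resp. `n(k-1) - 1`) on fewer
than `(k-1)n + ⌊(m+1)/2⌋` (resp. `(k-1)n + ⌊(m-1)/2⌋`) vertices avoids both.

Since `sInf ∅ = 0`, the Ramsey numbers must also be shown finite: by Ramsey's theorem for
`k`-uniform hypergraphs, a large complete hypergraph has a monochromatic clique on `n(k-1)+1`
vertices, which contains both `P^k_n` and `C^k_n`.
-/

lemma Nat.mul_add_le_mul_of_lt {i m d j : ℕ} (hi : i < m) (hj : j ≤ d) : i * d + j ≤ m * d :=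
  calc i * d + j ≤ (i + 1) * d := by rw [Nat.succ_mul]; omega
    _ ≤ m * d := Nat.mul_le_mul_right d hi

lemma Nat.mem_Icc_div_of_mem_Icc_mul {d i x : ℕ} (hd : 0 < d)
    (hx : x ∈ Icc (i * d) (i * d + d)) :
    i ∈ Icc (x / d - 1) (x / d) := by
  obtain ⟨h₁, h₂⟩ := mem_Icc.mp hx
  have hle : i ≤ x / d := (Nat.le_div_iff_mul_le hd).mpr h₁
  have hge : x / d ≤ i + 1 := Nat.div_le_of_le_mul (by rw [Nat.mul_succ, mul_comm]; exact h₂)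
  exact mem_Icc.mpr ⟨by omega, hle⟩

lemma Nat.card_Icc_sub_one_le_two (a : ℕ) : #(Icc (a - 1) a) ≤ 2 := by
  rw [Nat.card_Icc]; omega

-- In a loose cycle of `m` edges, position `m * d` of edge `m - 1` is position `0` of edge `0`.
lemma Nat.mem_of_mem_Icc_mul_of_mod {d m i p : ℕ} (hd : 0 < d) (hi : i < m)
    (hp : p ∈ Icc (i * d) (i * d + d)) :
    i ∈ if p % (m * d) = 0 then ({0, m - 1} : Finset ℕ)
      else Icc (p % (m * d) / d - 1) (p % (m * d) / d) := by
  have hpM : p ≤ m * d := (mem_Icc.mp hp).2.trans (Nat.mul_add_le_mul_of_lt hi le_rfl)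
  have hIcc := Nat.mem_Icc_div_of_mem_Icc_mul hd hp
  rcases hpM.lt_or_eq with hpM | rfl
  · rw [Nat.mod_eq_of_lt hpM]
    split_ifs with h0
    · rw [h0, Nat.zero_div, mem_Icc] at hIcc
      simp only [mem_insert, mem_singleton]
      omega
    · exact hIcc
  · rw [Nat.mod_self, if_pos rfl]
    rw [Nat.mul_div_cancel _ hd, mem_Icc] at hIcc
    simp only [mem_insert, mem_singleton]
    omega

lemma Nat.exists_eq_mul_add_of_le {d n x : ℕ} (hd : 0 < d) (hn : 0 < n) (hx : x ≤ n * d) :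
    ∃ i < n, ∃ j ≤ d, x = i * d + j := by
  rcases hx.lt_or_eq with hx | rfl
  · exact ⟨x / d, Nat.div_lt_of_lt_mul (by rwa [mul_comm]), x % d, (Nat.mod_lt x hd).le,
      by rw [mul_comm, Nat.div_add_mod]⟩
  · refine ⟨n - 1, by omega, d, le_rfl, ?_⟩
    rw [← Nat.succ_mul, Nat.succ_eq_add_one, Nat.sub_add_cancel hn]

lemma card_le_two_mul_card_of_forall_exists_mem {ι V : Type*} [DecidableEq V] (s : Finset ι)
    (e : ι → Finset V) (B : Finset V) (hit : ∀ i ∈ s, ∃ v ∈ B, v ∈ e i)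
    (hdeg : ∀ v, #{i ∈ s | v ∈ e i} ≤ 2) : #s ≤ 2 * #B := by
  rcases s.eq_empty_or_nonempty with rfl | ⟨i₀, hi₀⟩
  · simp
  obtain ⟨v₀, -⟩ := hit i₀ hi₀
  have : Nonempty V := ⟨v₀⟩
  choose! g hgB hge using hit
  refine card_le_mul_card_image_of_maps_to hgB 2 fun v _ => (card_le_card ?_).trans (hdeg v)
  intro i hi
  obtain ⟨his, rfl⟩ := mem_filter.mp hi
  exact mem_filter.mpr ⟨his, hge i his⟩

def IsMonochromatic (k : ℕ) {V : Type} (col : Finset V → Bool) (b : Bool) (S : Finset V) :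
    Prop :=
  ∀ e ⊆ S, #e = k → col e = b

-- Quantified over all vertex types, so that `N` is a bound independent of them.
def IsRamseyBound (k s t N : ℕ) : Prop :=
  ∀ {V : Type} [DecidableEq V] (W : Finset V) (col : Finset V → Bool), N ≤ #W →
    (∃ S ⊆ W, s ≤ #S ∧ IsMonochromatic k col true S) ∨
      (∃ S ⊆ W, t ≤ #S ∧ IsMonochromatic k col false S)

section Ramsey

variable {k : ℕ} {V : Type}

lemma isMonochromatic_empty (col : Finset V → Bool) (b : Bool) :
    IsMonochromatic (k + 1) col b ∅ := by
  intro e he hcard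
  simp [subset_empty.mp he] at hcard

lemma IsMonochromatic.insert [DecidableEq V] {col : Finset V → Bool} {b : Bool} {v : V}
    {S T : Finset V} (hT : IsMonochromatic (k + 1) col b T)
    (hlink : IsMonochromatic k (fun e => col (insert v e)) b S) (hTS : T ⊆ S) :
    IsMonochromatic (k + 1) col b (insert v T) := by
  intro e he hcard
  by_cases hve : v ∈ e
  · rw [← insert_erase hve]
    refine hlink _ (fun x hx => hTS ?_) (by rw [card_erase_of_mem hve, hcard]; rfl)
    obtain ⟨hxv, hxe⟩ := mem_erase.mp hx
    exact (mem_insert.mp (he hxe)).resolve_left hxv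
  · exact hT e ((subset_insert_iff_of_notMem hve).mp he) hcard

lemma isRamseyBound_zero (s t : ℕ) : IsRamseyBound 0 s t (max s t) := by
  intro V _ W col hW
  have hempty : ∀ S : Finset V, IsMonochromatic 0 col (col ∅) S := fun S e _ he => by
    rw [card_eq_zero.mp he]
  obtain ⟨S, hSW, hS⟩ := exists_subset_card_eq ((le_max_left s t).trans hW)
  obtain ⟨T, hTW, hT⟩ := exists_subset_card_eq ((le_max_right s t).trans hW)
  cases h : col ∅
  · exact .inr ⟨T, hTW, hT.ge, h ▸ hempty T⟩
  · exact .inl ⟨S, hSW, hS.ge, h ▸ hempty S⟩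

lemma isRamseyBound_left_zero (k t : ℕ) : IsRamseyBound (k + 1) 0 t 0 :=
  fun W col _ => .inl ⟨∅, empty_subset W, le_rfl, isMonochromatic_empty col true⟩

lemma isRamseyBound_right_zero (k s : ℕ) : IsRamseyBound (k + 1) s 0 0 :=
  fun W col _ => .inr ⟨∅, empty_subset W, le_rfl, isMonochromatic_empty col false⟩

/-- Remove a vertex `v` and colour each `k`-set `e` of the rest by `col (insert v e)`: inside a
large monochromatic set of this link colouring, a monochromatic set of the right colour extends
by `v`. -/
lemma IsRamseyBound.succ {s t N₁ N₂ N₀ : ℕ} (h₁ : IsRamseyBound (k + 1) s (t + 1) N₁)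
    (h₂ : IsRamseyBound (k + 1) (s + 1) t N₂)
    (h₀ : IsRamseyBound k (max N₁ N₂) (max N₁ N₂) N₀) :
    IsRamseyBound (k + 1) (s + 1) (t + 1) (N₀ + 1) := by
  intro V _ W col hW
  obtain ⟨v, hv⟩ := card_pos.mp (show 0 < #W by omega)
  have hW' : N₀ ≤ #(W.erase v) := by rw [card_erase_of_mem hv]; omega
  have hvW : insert v (W.erase v) ⊆ W := (insert_erase hv).subset
  rcases h₀ (W.erase v) (fun e => col (insert v e)) hW' with
    ⟨S, hSW, hS, hlink⟩ | ⟨S, hSW, hS, hlink⟩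
  · rcases h₁ S col ((le_max_left _ _).trans hS) with
      ⟨T, hTS, hT, hmono⟩ | ⟨T, hTS, hT, hmono⟩
    · have hvT : v ∉ T := fun h => (mem_erase.mp (hSW (hTS h))).1 rfl
      refine .inl ⟨insert v T, (insert_subset_insert v (hTS.trans hSW)).trans hvW, ?_,
        hmono.insert hlink hTS⟩
      rw [card_insert_of_notMem hvT]; omega
    · exact .inr ⟨T, hTS.trans (hSW.trans (erase_subset v W)), hT, hmono⟩
  · rcases h₂ S col ((le_max_right _ _).trans hS) with
      ⟨T, hTS, hT, hmono⟩ | ⟨T, hTS, hT, hmono⟩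
    · exact .inl ⟨T, hTS.trans (hSW.trans (erase_subset v W)), hT, hmono⟩
    · have hvT : v ∉ T := fun h => (mem_erase.mp (hSW (hTS h))).1 rfl
      refine .inr ⟨insert v T, (insert_subset_insert v (hTS.trans hSW)).trans hvW, ?_,
        hmono.insert hlink hTS⟩
      rw [card_insert_of_notMem hvT]; omega

end Ramsey

theorem exists_isRamseyBound : ∀ k s t : ℕ, ∃ N, IsRamseyBound k s t N
  | 0, s, t => ⟨max s t, isRamseyBound_zero s t⟩
  | k + 1, 0, t => ⟨0, isRamseyBound_left_zero k t⟩
  | k + 1, s + 1, 0 => ⟨0, isRamseyBound_right_zero k (s + 1)⟩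
  | k + 1, s + 1, t + 1 => by
    obtain ⟨N₁, h₁⟩ := exists_isRamseyBound (k + 1) s (t + 1)
    obtain ⟨N₂, h₂⟩ := exists_isRamseyBound (k + 1) (s + 1) t
    obtain ⟨N₀, h₀⟩ := exists_isRamseyBound k (max N₁ N₂) (max N₁ N₂)
    exact ⟨N₀ + 1, h₁.succ h₂ h₀⟩

theorem exists_isMonochromatic_fin (k s : ℕ) :
    ∃ N, ∀ col : Finset (Fin N) → Bool,
      ∃ b, ∃ S : Finset (Fin N), s ≤ #S ∧ IsMonochromatic k col b S := by
  obtain ⟨N, hN⟩ := exists_isRamseyBound k s s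
  refine ⟨N, fun col => ?_⟩
  rcases hN univ col (by simp) with ⟨S, -, hS, hmono⟩ | ⟨S, -, hS, hmono⟩
  exacts [⟨true, S, hS, hmono⟩, ⟨false, S, hS, hmono⟩]

lemma exists_injOn_Iio_of_le_card {V : Type*} {S : Finset V} {c : ℕ} (hc : 0 < c)
    (hcS : c ≤ #S) : ∃ f : ℕ → V, Set.InjOn f (Set.Iio c) ∧ ∀ x, f x ∈ S := by
  obtain ⟨T, hTS, rfl⟩ := exists_subset_card_eq hcS
  refine ⟨fun x => T.equivFin.symm ⟨x % #T, Nat.mod_lt x hc⟩, fun x hx y hy hxy => ?_,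
    fun x => hTS (Subtype.prop _)⟩
  have := Fin.mk.inj_iff.mp (T.equivFin.symm.injective (Subtype.val_injective hxy))
  rwa [Nat.mod_eq_of_lt hx, Nat.mod_eq_of_lt hy] at this

section LooseEdges

variable {k : ℕ} {V : Type} [DecidableEq V]

lemma cycleEdge_eq_pathEdge (n : ℕ) (f : ℕ → V) (i : ℕ) :
    cycleEdge k n f i = pathEdge k (fun x => f (x % (n * (k - 1)))) i :=
  rfl

lemma mem_pathEdge {f : ℕ → V} {i : ℕ} {v : V} :
    v ∈ pathEdge k f i ↔ ∃ j < k, f (i * (k - 1) + j) = v := by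
  simp [pathEdge]

lemma card_pathEdge {f : ℕ → V} {c i : ℕ} (hf : Set.InjOn f (Set.Iio c))
    (hi : i * (k - 1) + k ≤ c) : #(pathEdge k f i) = k := by
  rw [pathEdge, card_image_of_injOn, card_range]
  intro j hj j' hj' h
  simp only [coe_range, Set.mem_Iio] at hj hj'
  have := hf (Set.mem_Iio.mpr (by omega)) (Set.mem_Iio.mpr (by omega)) h
  omega

lemma card_cycleEdge {n : ℕ} {f : ℕ → V} {i : ℕ} (hf : Set.InjOn f (Set.Iio (n * (k - 1))))
    (hk : k ≤ n * (k - 1)) : #(cycleEdge k n f i) = k := by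
  rw [cycleEdge, card_image_of_injOn, card_range]
  intro j hj j' hj' h
  simp only [coe_range, Set.mem_Iio] at hj hj'
  have hmod := hf (Set.mem_Iio.mpr (Nat.mod_lt _ (by omega)))
    (Set.mem_Iio.mpr (Nat.mod_lt _ (by omega))) h
  have := Nat.ModEq.add_left_cancel' _ hmod
  rwa [Nat.ModEq, Nat.mod_eq_of_lt (by omega), Nat.mod_eq_of_lt (by omega)] at this

lemma hasPath_of_isMonochromatic {n : ℕ} {col : Finset V → Bool} {b : Bool} {S : Finset V}
    (hk : 1 ≤ k) (hS : n * (k - 1) + 1 ≤ #S) (hmono : IsMonochromatic k col b S) :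
    hasPath k n col b := by
  obtain ⟨f, hf, hfS⟩ := exists_injOn_Iio_of_le_card (Nat.succ_pos _) hS
  refine ⟨f, hf, fun i hi => hmono _ (fun v hv => ?_) (card_pathEdge hf ?_)⟩
  · obtain ⟨j, -, rfl⟩ := mem_pathEdge.mp hv
    exact hfS _
  · have := Nat.mul_add_le_mul_of_lt hi (le_refl (k - 1))
    omega

lemma hasCycle_of_isMonochromatic {n : ℕ} {col : Finset V → Bool} {b : Bool} {S : Finset V}
    (hk : 2 ≤ k) (hn : 2 ≤ n) (hS : n * (k - 1) ≤ #S) (hmono : IsMonochromatic k col b S) :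
    hasCycle k n col b := by
  have hM : 2 * (k - 1) ≤ n * (k - 1) := Nat.mul_le_mul_right _ hn
  obtain ⟨f, hf, hfS⟩ := exists_injOn_Iio_of_le_card (by omega) hS
  refine ⟨f, hf, fun i _ => hmono _ (fun v hv => ?_) ?_⟩
  · rw [cycleEdge_eq_pathEdge] at hv
    obtain ⟨j, -, rfl⟩ := mem_pathEdge.mp hv
    exact hfS _
  · exact card_cycleEdge hf (by omega)

lemma card_filter_mem_pathEdge_le_two {m : ℕ} {f : ℕ → V} (hk : 2 ≤ k)
    (hf : Set.InjOn f (Set.Iio (m * (k - 1) + 1))) (v : V) :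
    #{i ∈ range m | v ∈ pathEdge k f i} ≤ 2 := by
  have hpos : ∀ i ∈ {i ∈ range m | v ∈ pathEdge k f i},
      ∃ x ∈ Icc (i * (k - 1)) (i * (k - 1) + (k - 1)), x < m * (k - 1) + 1 ∧ f x = v := by
    intro i hi
    obtain ⟨him, hv⟩ := mem_filter.mp hi
    obtain ⟨j, hj, rfl⟩ := mem_pathEdge.mp hv
    have := Nat.mul_add_le_mul_of_lt (mem_range.mp him) (show j ≤ k - 1 by omega)
    exact ⟨_, mem_Icc.mpr ⟨by omega, by omega⟩, by omega, rfl⟩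
  rcases (filter (fun i => v ∈ pathEdge k f i) (range m)).eq_empty_or_nonempty with
    h | ⟨i₀, hi₀⟩
  · simp [h]
  obtain ⟨x₀, -, hx₀, rfl⟩ := hpos i₀ hi₀
  refine (card_le_card fun i hi => ?_).trans (Nat.card_Icc_sub_one_le_two (x₀ / (k - 1)))
  obtain ⟨x, hx, hxm, hfx⟩ := hpos i hi
  rw [← hf hxm hx₀ hfx]
  exact Nat.mem_Icc_div_of_mem_Icc_mul (by omega) hx

lemma card_filter_mem_cycleEdge_le_two {m : ℕ} {f : ℕ → V} (hk : 2 ≤ k)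
    (hf : Set.InjOn f (Set.Iio (m * (k - 1)))) (v : V) :
    #{i ∈ range m | v ∈ cycleEdge k m f i} ≤ 2 := by
  set M := m * (k - 1)
  have hpos : ∀ i ∈ {i ∈ range m | v ∈ cycleEdge k m f i},
      i < m ∧ ∃ p ∈ Icc (i * (k - 1)) (i * (k - 1) + (k - 1)), f (p % M) = v := by
    intro i hi
    obtain ⟨him, hv⟩ := mem_filter.mp hi
    rw [cycleEdge_eq_pathEdge] at hv
    obtain ⟨j, hj, rfl⟩ := mem_pathEdge.mp hv
    exact ⟨mem_range.mp him, _, mem_Icc.mpr ⟨by omega, by omega⟩, rfl⟩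
  rcases (filter (fun i => v ∈ cycleEdge k m f i) (range m)).eq_empty_or_nonempty with
    h | ⟨i₀, hi₀⟩
  · simp [h]
  obtain ⟨hi₀m, p₀, -, rfl⟩ := hpos i₀ hi₀
  have hM : 0 < M := Nat.mul_pos (by omega) (by omega)
  refine (card_le_card (t := if p₀ % M = 0 then {0, m - 1}
    else Icc (p₀ % M / (k - 1) - 1) (p₀ % M / (k - 1))) fun i hi => ?_).trans ?_
  · obtain ⟨him, p, hp, hfp⟩ := hpos i hi
    rw [← hf (Nat.mod_lt p hM) (Nat.mod_lt p₀ hM) hfp]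
    exact Nat.mem_of_mem_Icc_mul_of_mod (by omega) him hp
  · split_ifs
    exacts [card_le_two, Nat.card_Icc_sub_one_le_two _]

end LooseEdges

section Coloring

variable {k : ℕ} {V : Type} [DecidableEq V]

def subsetColoring (A : Finset V) (e : Finset V) : Bool := decide (e ⊆ A)

lemma le_card_of_hasPath_subsetColoring_true {n : ℕ} {A : Finset V} (hk : 2 ≤ k) (hn : 0 < n)
    (h : hasPath k n (subsetColoring A) true) : n * (k - 1) + 1 ≤ #A := by
  obtain ⟨f, hf, hred⟩ := h
  have hA : ∀ x ∈ range (n * (k - 1) + 1), f x ∈ A := fun x hx => by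
    obtain ⟨i, hi, j, hj, rfl⟩ :=
      Nat.exists_eq_mul_add_of_le (by omega) hn (Nat.lt_succ_iff.mp (mem_range.mp hx))
    exact of_decide_eq_true (hred i hi) (mem_pathEdge.mpr ⟨j, by omega, rfl⟩)
  simpa using card_le_card_of_injOn f hA (by simpa using hf)

lemma le_card_of_hasCycle_subsetColoring_true {n : ℕ} {A : Finset V} (hk : 2 ≤ k)
    (h : hasCycle k n (subsetColoring A) true) : n * (k - 1) ≤ #A := by
  obtain ⟨f, hf, hred⟩ := h
  have hA : ∀ x ∈ range (n * (k - 1)), f x ∈ A := fun x hx => by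
    have hx := mem_range.mp hx
    have hn : 0 < n := Nat.pos_of_ne_zero (by rintro rfl; simp at hx)
    obtain ⟨i, hi, j, hj, hxij⟩ := Nat.exists_eq_mul_add_of_le (by omega) hn hx.le
    refine of_decide_eq_true (hred i hi) ?_
    rw [cycleEdge_eq_pathEdge]
    exact mem_pathEdge.mpr ⟨j, by omega, by rw [← hxij, Nat.mod_eq_of_lt hx]⟩
  simpa using card_le_card_of_injOn f hA (by simpa using hf)

lemma le_two_mul_card_compl_of_hasPath_subsetColoring_false [Fintype V] {m : ℕ} {A : Finset V}
    (hk : 2 ≤ k) (h : hasPath k m (subsetColoring A) false) : m ≤ 2 * #Aᶜ := by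
  obtain ⟨f, hf, hblue⟩ := h
  refine card_range m ▸ card_le_two_mul_card_of_forall_exists_mem _ (pathEdge k f) Aᶜ
    (fun i hi => ?_) (card_filter_mem_pathEdge_le_two hk hf)
  obtain ⟨v, hv, hvA⟩ := not_subset.mp (of_decide_eq_false (hblue i (mem_range.mp hi)))
  exact ⟨v, mem_compl.mpr hvA, hv⟩

lemma le_two_mul_card_compl_of_hasCycle_subsetColoring_false [Fintype V] {m : ℕ} {A : Finset V}
    (hk : 2 ≤ k) (h : hasCycle k m (subsetColoring A) false) : m ≤ 2 * #Aᶜ := by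
  obtain ⟨f, hf, hblue⟩ := h
  refine card_range m ▸ card_le_two_mul_card_of_forall_exists_mem _ (cycleEdge k m f) Aᶜ
    (fun i hi => ?_) (card_filter_mem_cycleEdge_le_two hk hf)
  obtain ⟨v, hv, hvA⟩ := not_subset.mp (of_decide_eq_false (hblue i (mem_range.mp hi)))
  exact ⟨v, mem_compl.mpr hvA, hv⟩

end Coloring

lemma Fin.exists_card_eq_min_card_compl_eq {N : ℕ} (a : ℕ) :
    ∃ A : Finset (Fin N), #A = min a N ∧ #Aᶜ = N - min a N := by
  obtain ⟨A, -, hA⟩ := exists_subset_card_eq (show min a N ≤ #(univ : Finset (Fin N)) by simp)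
  exact ⟨A, hA, by rw [card_compl, hA, Fintype.card_fin]⟩

lemma le_ramseyPP {k n m : ℕ} (hk : 2 ≤ k) (hm : 0 < m) (hnm : m ≤ n) :
    (k - 1) * n + (m + 1) / 2 ≤ ramseyPP k n m := by
  obtain ⟨N₀, hN₀⟩ := exists_isMonochromatic_fin k (n * (k - 1) + 1)
  have hmn : m * (k - 1) ≤ n * (k - 1) := Nat.mul_le_mul_right _ hnm
  refine le_csInf ⟨N₀, fun col => ?_⟩ fun N hN => ?_
  · obtain ⟨b, S, hS, hmono⟩ := hN₀ col
    cases b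
    · exact .inr (hasPath_of_isMonochromatic (by omega) (by omega) hmono)
    · exact .inl (hasPath_of_isMonochromatic (by omega) hS hmono)
  · obtain ⟨A, hA, hAc⟩ := Fin.exists_card_eq_min_card_compl_eq (N := N) (n * (k - 1))
    rw [mul_comm]
    rcases hN (subsetColoring A) with h | h
    · have := le_card_of_hasPath_subsetColoring_true hk (by omega) h
      omega
    · have := le_two_mul_card_compl_of_hasPath_subsetColoring_false hk h
      omega

lemma le_ramseyPC {k n m : ℕ} (hk : 2 ≤ k) (hm : 2 ≤ m) (hnm : m ≤ n) :
    (k - 1) * n + (m + 1) / 2 ≤ ramseyPC k n m := by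
  obtain ⟨N₀, hN₀⟩ := exists_isMonochromatic_fin k (n * (k - 1) + 1)
  have hmn : m * (k - 1) ≤ n * (k - 1) := Nat.mul_le_mul_right _ hnm
  refine le_csInf ⟨N₀, fun col => ?_⟩ fun N hN => ?_
  · obtain ⟨b, S, hS, hmono⟩ := hN₀ col
    cases b
    · exact .inr (hasCycle_of_isMonochromatic hk hm (by omega) hmono)
    · exact .inl (hasPath_of_isMonochromatic (by omega) hS hmono)
  · obtain ⟨A, hA, hAc⟩ := Fin.exists_card_eq_min_card_compl_eq (N := N) (n * (k - 1))
    rw [mul_comm]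
    rcases hN (subsetColoring A) with h | h
    · have := le_card_of_hasPath_subsetColoring_true hk (by omega) h
      omega
    · have := le_two_mul_card_compl_of_hasCycle_subsetColoring_false hk h
      omega

lemma le_ramseyCC {k n m : ℕ} (hk : 2 ≤ k) (hm : 2 ≤ m) (hnm : m ≤ n) :
    (k - 1) * n + (m - 1) / 2 ≤ ramseyCC k n m := by
  obtain ⟨N₀, hN₀⟩ := exists_isMonochromatic_fin k (n * (k - 1))
  have hmn : m * (k - 1) ≤ n * (k - 1) := Nat.mul_le_mul_right _ hnm
  have hn : 0 < n * (k - 1) := Nat.mul_pos (by omega) (by omega)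
  refine le_csInf ⟨N₀, fun col => ?_⟩ fun N hN => ?_
  · obtain ⟨b, S, hS, hmono⟩ := hN₀ col
    cases b
    · exact .inr (hasCycle_of_isMonochromatic hk hm (by omega) hmono)
    · exact .inl (hasCycle_of_isMonochromatic hk (by omega) hS hmono)
  · obtain ⟨A, hA, hAc⟩ := Fin.exists_card_eq_min_card_compl_eq (N := N) (n * (k - 1) - 1)
    rw [mul_comm]
    rcases hN (subsetColoring A) with h | h
    · have := le_card_of_hasCycle_subsetColoring_true hk h
      omega
    · have := le_two_mul_card_compl_of_hasCycle_subsetColoring_false hk h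
      omega

theorem ramsey_lower_bounds (n m k : ℕ) (hm : 2 ≤ m) (hnm : m ≤ n) (hk : 3 ≤ k) :
    (k - 1) * n + (m + 1) / 2 ≤ ramseyPP k n m ∧
    (k - 1) * n + (m + 1) / 2 ≤ ramseyPC k n m ∧
    (k - 1) * n + (m - 1) / 2 ≤ ramseyCC k n m :=
  ⟨le_ramseyPP (by omega) (by omega) hnm, le_ramseyPC (by omega) hm hnm,
    le_ramseyCC (by omega) hm hnm⟩
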